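/- Let S ⊂ ℝⁿ be a nonempty closed set and let x ∉ S be a point where d_S is not differentiable. Then the set of extreme points of D⁺d_S(x) satisfies extr(D⁺d_S(x)) = D*d_S(x) = D⁺d_S(x) ∩ ∂B₁(0), where ∂B₁(0) is the unit sphere of ℝⁿ. -/

import Mathlib

open scoped InnerProductSpace
open Metric Set Filter

noncomputable section

abbrev En (n : ℕ) := EuclideanSpace ℝ (Fin n)

variable {n : ℕ}

/-- Distance from the boundary of `Ω`. -/
noncomputable def dBd (Ω : Set (En n)) (x : En n) : ℝ := Metric.infDist x (frontier Ω)

/-- The inradius `ρ_Ω := max_{closure Ω} d_∂Ω`. -/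
noncomputable def rhoΩ (Ω : Set (En n)) : ℝ := sSup (dBd Ω '' closure Ω)

/-- The singular set `Σ(Ω)`: points of `Ω` where `d_∂Ω` is not differentiable. -/
def SingSet (Ω : Set (En n)) : Set (En n) := {x ∈ Ω | ¬ DifferentiableAt ℝ (dBd Ω) x}

/-- The cut locus: the closure of the singular set. -/
def cutLocus (Ω : Set (En n)) : Set (En n) := closure (SingSet Ω)

/-- The high ridge: points of `closure Ω` where `d_∂Ω` attains its maximum `ρ_Ω`. -/
def highRidge (Ω : Set (En n)) : Set (En n) := {x ∈ closure Ω | dBd Ω x = rhoΩ Ω}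

noncomputable def c₀ : ℝ := 3 ^ ((4 : ℝ) / 3) / 4

/-- The candidate web solution `φ_Ω`. -/
noncomputable def phiΩ (Ω : Set (En n)) (x : En n) : ℝ :=
  c₀ * (rhoΩ Ω ^ ((4 : ℝ) / 3) - (rhoΩ Ω - dBd Ω x) ^ ((4 : ℝ) / 3))

/-- The infinity Laplacian `⟨D²φ(x)∇φ(x), ∇φ(x)⟩` of a smooth function. -/
noncomputable def infLap (φ : En n → ℝ) (x : En n) : ℝ :=
  ⟪(fderiv ℝ (gradient φ) x) (gradient φ x), gradient φ x⟫_ℝ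

/-- Viscosity subsolution of `-Δ_∞ u = 1` on an open set `A`. -/
def IsViscSubsol (A : Set (En n)) (u : En n → ℝ) : Prop :=
  ∀ φ : En n → ℝ, ContDiffOn ℝ 2 φ A → ∀ x₀ ∈ A,
    IsLocalMin (φ - u) x₀ → -infLap φ x₀ ≤ 1

/-- Viscosity supersolution of `-Δ_∞ u = 1` on an open set `A`. -/
def IsViscSupersol (A : Set (En n)) (u : En n → ℝ) : Prop :=
  ∀ φ : En n → ℝ, ContDiffOn ℝ 2 φ A → ∀ x₀ ∈ A,
    IsLocalMax (φ - u) x₀ → 1 ≤ -infLap φ x₀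

/-- Viscosity solution of `-Δ_∞ u = 1` on an open set `A`. -/
def IsViscSol (A : Set (En n)) (u : En n → ℝ) : Prop :=
  ContinuousOn u A ∧ IsViscSubsol A u ∧ IsViscSupersol A u

/-- Viscosity solution of the Dirichlet problem `-Δ_∞ u = 1` in `Ω`, `u = 0` on `∂Ω`. -/
def IsDirichletSol (Ω : Set (En n)) (u : En n → ℝ) : Prop :=
  ContinuousOn u (closure Ω) ∧ (∀ x ∈ frontier Ω, u x = 0) ∧ IsViscSol Ω u

/-- `u` is a web function on `Ω`: it depends only on the distance from the boundary. -/
def IsWebOn (Ω : Set (En n)) (u : En n → ℝ) : Prop :=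
  ∃ f : ℝ → ℝ, ContinuousOn f (Set.Icc 0 (rhoΩ Ω)) ∧ ∀ x ∈ closure Ω, u x = f (dBd Ω x)

/-- Fréchet superdifferential of `u` at `x`. -/
def superDiff (u : En n → ℝ) (x : En n) : Set (En n) :=
  {p | ∀ ε > 0, ∀ᶠ y in nhds x, u y - u x - ⟪p, y - x⟫_ℝ ≤ ε * ‖y - x‖}

/-- Set of reachable gradients `D*u(x)`. -/
def reachGrad (u : En n → ℝ) (x : En n) : Set (En n) :=
  {p | ∃ xs : ℕ → En n, (∀ h, xs h ≠ x) ∧ (∀ h, DifferentiableAt ℝ u (xs h)) ∧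
    Filter.Tendsto xs Filter.atTop (nhds x) ∧
    Filter.Tendsto (fun h => gradient u (xs h)) Filter.atTop (nhds p)}

/-- The set of projections of `x` onto a closed set `S`. -/
def projSet (S : Set (En n)) (x : En n) : Set (En n) :=
  {y ∈ S | dist x y = Metric.infDist x S}

end

/-!
Let `d = d_S(x) > 0` and let `P` be the set of unit vectors `(x - q) / d` with `q ∈ π_S(x)`.
On the open segment from `x` to `q`, `d_S` is squeezed between `d - |· - x|` and `|· - q|`, so it
is differentiable there with gradient `(x - q) / d`; hence `P ⊆ D*d_S(x)`. Conversely, at a point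
`y ∉ S` of differentiability the gradient is `(y - q_y) / d_S(y)`, and limits of projections are
projections, so `D*d_S(x) = P`. The cone `|· - q|` touches `d_S` from above at `x`, so
`P ⊆ D⁺d_S(x)`. For projections `q_t` of `x + t v` one has
`d_S(x + t v) ≥ d + t ⟪(x - q_t) / |x - q_t|, v⟫`, and the `q_t` accumulate on `π_S(x)` as
`t → 0⁺`; so every `p ∈ D⁺d_S(x)` satisfies `⟪p, v⟫ ≥ min_P ⟪·, v⟫`, and separation gives
`D⁺d_S(x) = conv P`. Finally `P` is a compact subset of the unit sphere, and in a strictly convex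
space both the extreme points of `conv P` and the points of `conv P` on the sphere are exactly `P`.
-/

open NormedSpace Topology

section NormedSpace

variable {E : Type*} [NormedAddCommGroup E] [NormedSpace ℝ E]

theorem norm_normalize_le_one (a : E) : ‖normalize a‖ ≤ 1 := by
  rcases eq_or_ne a 0 with rfl | ha
  · simp
  · exact (norm_normalize ha).le

theorem continuousAt_normalize {a : E} (ha : a ≠ 0) : ContinuousAt NormedSpace.normalize a :=
  (continuousAt_id.norm.inv₀ (norm_ne_zero_iff.2 ha)).smul continuousAt_id

theorem HasFDerivAt.of_le_of_le {g u h : E → ℝ} {f' : StrongDual ℝ E} {z : E}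
    (hg : HasFDerivAt g f' z) (hh : HasFDerivAt h f' z) (hgu : ∀ y, g y ≤ u y)
    (huh : ∀ y, u y ≤ h y) (hgz : g z = u z) (hhz : h z = u z) : HasFDerivAt u f' z := by
  rw [hasFDerivAt_iff_isLittleO_nhds_zero, Asymptotics.isLittleO_iff] at hg hh ⊢
  intro c hc
  filter_upwards [hg hc, hh hc] with y hgy hhy
  rw [Real.norm_eq_abs, abs_le] at hgy hhy ⊢
  constructor <;> linarith [hgu (z + y), huh (z + y)]

end NormedSpace

section InnerProductSpace

variable {E : Type*} [NormedAddCommGroup E] [InnerProductSpace ℝ E]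

theorem inner_normalize_self (a : E) : ⟪normalize a, a⟫_ℝ = ‖a‖ := by
  rcases eq_or_ne a 0 with rfl | ha
  · simp
  · rw [NormedSpace.normalize, real_inner_smul_left, real_inner_self_eq_norm_sq]
    field_simp

theorem norm_add_inner_normalize_sub_le (a b : E) : ‖a‖ + ⟪normalize a, b - a⟫_ℝ ≤ ‖b‖ := by
  have hb : ⟪normalize a, b⟫_ℝ ≤ ‖b‖ :=
    calc ⟪normalize a, b⟫_ℝ ≤ ‖normalize a‖ * ‖b‖ := real_inner_le_norm _ _
      _ ≤ ‖b‖ := mul_le_of_le_one_left (norm_nonneg b) (norm_normalize_le_one a)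
  rw [inner_sub_right, inner_normalize_self]
  linarith

theorem hasGradientAt_norm_sub [CompleteSpace E] {q z : E} (hz : z ≠ q) :
    HasGradientAt (fun y => ‖y - q‖) (normalize (z - q)) z := by
  have hzq : z - q ≠ 0 := sub_ne_zero.2 hz
  have hsq := ((hasFDerivAt_id z).sub_const q).norm_sq.sqrt (by positivity)
  simp only [id, Real.sqrt_sq (norm_nonneg _)] at hsq
  rw [hasGradientAt_iff_hasFDerivAt]
  refine hsq.congr_fderiv ?_
  ext v
  simp only [one_div, mul_inv_rev, map_sub, ContinuousLinearMap.comp_id, smul_apply, sub_apply,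
    coe_innerSL_apply, nsmul_eq_mul, Nat.cast_ofNat, smul_eq_mul, NormedSpace.normalize, map_smul,
    InnerProductSpace.toDual_apply_apply]
  field_simp

theorem Convex.mem_of_forall_exists_inner_le [CompleteSpace E] {K : Set E} (hK : Convex ℝ K)
    (hKc : IsClosed K) {p : E} (h : ∀ v, ∃ q ∈ K, ⟪v, p⟫_ℝ ≤ ⟪v, q⟫_ℝ) : p ∈ K := by
  rw [← iInter_halfSpaces_eq hK hKc]
  refine mem_iInter.2 fun l => ?_
  obtain ⟨q, hq, hle⟩ := h ((InnerProductSpace.toDual ℝ E).symm l)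
  exact ⟨q, hq, by simpa only [InnerProductSpace.toDual_symm_apply] using hle⟩

end InnerProductSpace

section FiniteDimensional

variable {E : Type*} [NormedAddCommGroup E] [NormedSpace ℝ E] [FiniteDimensional ℝ E]

theorem convexHull_eq_biUnion_image_stdSimplex (P : Set E) :
    convexHull ℝ P = ⋃ k ∈ Finset.range (Module.finrank ℝ E + 2),
      (fun wz : (Fin k → ℝ) × (Fin k → E) => ∑ i, wz.1 i • wz.2 i) ''
        (stdSimplex ℝ (Fin k) ×ˢ univ.pi fun _ => P) := by
  refine Subset.antisymm (fun y hy => ?_) ?_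
  · obtain ⟨ι, _, z, w, hzP, hai, hw0, hw1, rfl⟩ := eq_pos_convex_span_of_mem_convexHull hy
    have hcard : Fintype.card ι < Module.finrank ℝ E + 2 := by
      have := (vectorSpan ℝ (range z)).finrank_le
      have := hai.card_le_finrank_succ
      omega
    let e := Fintype.equivFin ι
    refine mem_biUnion (Finset.mem_range.2 hcard) ⟨(w ∘ e.symm, z ∘ e.symm), ⟨⟨?_, ?_⟩, ?_⟩, ?_⟩
    · exact fun i => (hw0 _).le
    · simpa [e.symm.sum_comp w] using hw1
    · exact fun i _ => hzP (mem_range_self _)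
    · exact e.symm.sum_comp (fun i => w i • z i)
  · refine iUnion₂_subset fun k _ => ?_
    rintro _ ⟨⟨w, z⟩, ⟨hw, hz⟩, rfl⟩
    exact (convex_convexHull ℝ P).sum_mem (fun i _ => hw.1 i) hw.2
      (fun i _ => subset_convexHull ℝ P (hz i (mem_univ i)))

theorem IsCompact.convexHull {P : Set E} (hP : IsCompact P) : IsCompact (convexHull ℝ P) := by
  rw [convexHull_eq_biUnion_image_stdSimplex]
  refine (Finset.range _).isCompact_biUnion fun k _ => ?_
  exact ((isCompact_stdSimplex ℝ (Fin k)).prod (isCompact_univ_pi fun _ => hP)).image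
    (by fun_prop)

end FiniteDimensional

section StrictConvexSpace

variable {E : Type*} [NormedAddCommGroup E] [NormedSpace ℝ E] [StrictConvexSpace ℝ E]
  {P : Set E} {c : E} {r : ℝ}

theorem convexHull_inter_sphere_subset_extremePoints (hP : P ⊆ sphere c r) :
    convexHull ℝ P ∩ sphere c r ⊆ extremePoints ℝ (convexHull ℝ P) := by
  have hball : convexHull ℝ P ⊆ closedBall c r :=
    convexHull_min (hP.trans sphere_subset_closedBall) (convex_closedBall c r)
  have hsphere : sphere c r ⊆ extremePoints ℝ (closedBall c r) := by
    rcases eq_or_ne r 0 with rfl | hr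
    · simp [sphere_zero, closedBall_zero]
    · exact StrictConvexSpace.sphere_subset_extremePoints_closedBall c hr
  exact fun p hp => inter_extremePoints_subset_extremePoints_of_subset hball ⟨hp.1, hsphere hp.2⟩

theorem extremePoints_convexHull_eq_of_subset_sphere (hP : P ⊆ sphere c r) :
    extremePoints ℝ (convexHull ℝ P) = P :=
  extremePoints_convexHull_subset.antisymm fun _ hp =>
    convexHull_inter_sphere_subset_extremePoints hP ⟨subset_convexHull ℝ P hp, hP hp⟩

theorem convexHull_inter_sphere_eq_of_subset_sphere (hP : P ⊆ sphere c r) :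
    convexHull ℝ P ∩ sphere c r = P :=
  ((convexHull_inter_sphere_subset_extremePoints hP).trans extremePoints_convexHull_subset).antisymm
    fun _ hp => ⟨subset_convexHull ℝ P hp, hP hp⟩

end StrictConvexSpace

section DistanceFunction

variable {n : ℕ} {S : Set (En n)}

def projDirs (S : Set (En n)) (x : En n) : Set (En n) := (fun q => normalize (x - q)) '' projSet S x

theorem projSet_nonempty (hS : S.Nonempty) (hSc : IsClosed S) (x : En n) :
    (projSet S x).Nonempty :=
  let ⟨q, hqS, hq⟩ := hSc.exists_infDist_eq_dist hS x
  ⟨q, hqS, hq.symm⟩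

theorem isCompact_projSet (hSc : IsClosed S) (x : En n) : IsCompact (projSet S x) := by
  have : projSet S x = S ∩ sphere x (infDist x S) := by
    ext q
    simp only [projSet, mem_ofPred_eq, mem_inter_iff, mem_sphere, dist_comm q x]
  rw [this]
  exact (isCompact_sphere x _).inter_left hSc

theorem infDist_le_norm_sub {q : En n} (hq : q ∈ S) (y : En n) : infDist y S ≤ ‖y - q‖ :=
  (infDist_le_dist_of_mem hq).trans_eq (dist_eq_norm y q)

theorem norm_sub_of_mem_projSet {x q : En n} (hq : q ∈ projSet S x) : ‖x - q‖ = infDist x S :=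
  (dist_eq_norm x q).symm.trans hq.2

theorem ne_of_mem_projSet {x q : En n} (hd : 0 < infDist x S) (hq : q ∈ projSet S x) : x ≠ q := by
  rintro rfl
  exact hd.ne' (hq.2.symm.trans (dist_self x))

theorem mem_projSet_of_tendsto {ι : Type*} {l : Filter ι} [l.NeBot] (hSc : IsClosed S)
    {y q : ι → En n} {y₀ q₀ : En n} (hy : Tendsto y l (𝓝 y₀)) (hq : Tendsto q l (𝓝 q₀))
    (hmem : ∀ i, q i ∈ projSet S (y i)) : q₀ ∈ projSet S y₀ :=
  ⟨hSc.mem_of_tendsto hq (Eventually.of_forall fun i => (hmem i).1),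
    tendsto_nhds_unique (hy.dist hq)
      (((continuous_infDist_pt S).tendsto y₀).comp hy |>.congr fun i => (hmem i).2.symm)⟩

theorem dist_le_of_mem_projSet {x y q : En n} (hq : q ∈ projSet S y) :
    dist x q ≤ infDist x S + 2 * dist x y := by
  calc dist x q ≤ dist x y + infDist y S := hq.2 ▸ dist_triangle x y q
    _ ≤ dist x y + (infDist x S + dist y x) := by gcongr; exact infDist_le_infDist_add_dist
    _ = infDist x S + 2 * dist x y := by rw [dist_comm y x]; ring

theorem infDist_add_inner_le {x y q : En n} (hq : q ∈ projSet S y) :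
    infDist x S + ⟪normalize (x - q), y - x⟫_ℝ ≤ infDist y S := by
  have h := norm_add_inner_normalize_sub_le (x - q) (y - q)
  rw [sub_sub_sub_cancel_right, norm_sub_of_mem_projSet hq, ← dist_eq_norm] at h
  linarith [infDist_le_dist_of_mem (x := x) hq.1]

theorem projDirs_subset_sphere {x : En n} (hd : 0 < infDist x S) :
    projDirs S x ⊆ sphere 0 1 := by
  rintro _ ⟨q, hq, rfl⟩
  exact mem_sphere_zero_iff_norm.2 (norm_normalize (sub_ne_zero.2 (ne_of_mem_projSet hd hq)))

theorem isCompact_projDirs (hSc : IsClosed S) {x : En n} (hd : 0 < infDist x S) :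
    IsCompact (projDirs S x) :=
  (isCompact_projSet hSc x).image_of_continuousOn fun _ hq =>
    ((continuousAt_normalize (sub_ne_zero.2 (ne_of_mem_projSet hd hq))).comp
      (continuousAt_const.sub continuousAt_id)).continuousWithinAt

theorem convex_superDiff (u : En n → ℝ) (x : En n) : Convex ℝ (superDiff u x) := by
  intro p hp p' hp' a b ha hb hab ε hε
  filter_upwards [hp ε hε, hp' ε hε] with y hy hy'
  have hsplit : u y - u x - ⟪a • p + b • p', y - x⟫_ℝ
      = a * (u y - u x - ⟪p, y - x⟫_ℝ) + b * (u y - u x - ⟪p', y - x⟫_ℝ) := by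
    rw [inner_add_left, real_inner_smul_left, real_inner_smul_left]
    linear_combination (u y - u x) * hab.symm
  rw [hsplit]
  linear_combination mul_le_mul_of_nonneg_left hy ha + mul_le_mul_of_nonneg_left hy' hb +
    ε * ‖y - x‖ * hab

theorem mem_superDiff_of_le {u h : En n → ℝ} {x p : En n} (hle : ∀ y, u y ≤ h y)
    (heq : u x = h x) (hh : HasGradientAt h p x) : p ∈ superDiff u x := by
  intro ε hε
  have hlo := (hasGradientAt_iff_hasFDerivAt.1 hh).isLittleO
  rw [Asymptotics.isLittleO_iff] at hlo
  filter_upwards [hlo hε] with y hy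
  rw [Real.norm_eq_abs, InnerProductSpace.toDual_apply_apply] at hy
  linarith [le_abs_self (h y - h x - ⟪p, y - x⟫_ℝ), hle y]

theorem eventually_sub_le_of_mem_superDiff {u : En n → ℝ} {x p : En n} (hp : p ∈ superDiff u x)
    {v : En n} {c : ℝ} (hc : ⟪p, v⟫_ℝ < c) :
    ∀ᶠ t in 𝓝[>] 0, u (x + t • v) - u x ≤ t * c := by
  set ε := (c - ⟪p, v⟫_ℝ) / (‖v‖ + 1)
  have hε : 0 < ε := div_pos (sub_pos.2 hc) (by positivity)
  have hεv : ε * ‖v‖ ≤ c - ⟪p, v⟫_ℝ := by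
    rw [div_mul_eq_mul_div, div_le_iff₀ (by positivity)]
    nlinarith [norm_nonneg v]
  have hline : Tendsto (fun t : ℝ => x + t • v) (𝓝[>] 0) (𝓝 x) := by
    have hcont : Continuous fun t : ℝ => x + t • v := by fun_prop
    exact (hcont.tendsto' 0 x (by simp)).mono_left nhdsWithin_le_nhds
  filter_upwards [hline.eventually (hp ε hε), self_mem_nhdsWithin] with t ht htpos
  rw [add_sub_cancel_left, real_inner_smul_right, norm_smul, Real.norm_of_nonneg htpos.out.le]
    at ht
  linear_combination ht + mul_le_mul_of_nonneg_left hεv htpos.out.le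

theorem projDirs_subset_superDiff {x : En n} (hd : 0 < infDist x S) :
    projDirs S x ⊆ superDiff (fun z => infDist z S) x := by
  rintro _ ⟨q, hq, rfl⟩
  exact mem_superDiff_of_le (infDist_le_norm_sub hq.1) (norm_sub_of_mem_projSet hq).symm
    (hasGradientAt_norm_sub (ne_of_mem_projSet hd hq))

theorem hasGradientAt_infDist_of_mem_projSet {x q : En n} (hd : 0 < infDist x S)
    (hq : q ∈ projSet S x) {t : ℝ} (ht : t ∈ Ioo 0 1) :
    HasGradientAt (fun z => infDist z S) (normalize (x - q)) (x - t • (x - q)) := by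
  set z := x - t • (x - q)
  have hxq : x - q ≠ 0 := sub_ne_zero.2 (ne_of_mem_projSet hd hq)
  have hzq : z - q = (1 - t) • (x - q) := by simp only [z]; module
  have hzx : z - x = -(t • (x - q)) := by simp only [z]; module
  have hzq_norm : ‖z - q‖ = (1 - t) * infDist x S := by
    rw [hzq, norm_smul, Real.norm_of_nonneg (by linarith [ht.2]), norm_sub_of_mem_projSet hq]
  have hzx_norm : ‖z - x‖ = t * infDist x S := by
    rw [hzx, norm_neg, norm_smul, Real.norm_of_nonneg ht.1.le, norm_sub_of_mem_projSet hq]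
  have hupper : HasGradientAt (fun y => ‖y - q‖) (normalize (x - q)) z := by
    have h := hasGradientAt_norm_sub (sub_ne_zero.1 (hzq ▸ smul_ne_zero (by linarith [ht.2]) hxq))
    rwa [hzq, normalize_smul_of_pos (by linarith [ht.2])] at h
  have hlower : HasGradientAt (fun y => infDist x S - ‖y - x‖) (normalize (x - q)) z := by
    have h := hasGradientAt_norm_sub
      (sub_ne_zero.1 (hzx ▸ neg_ne_zero.2 (smul_ne_zero ht.1.ne' hxq)))
    rw [hzx, normalize_neg, normalize_smul_of_pos ht.1] at h
    simpa only [hasGradientAt_iff_hasFDerivAt, map_neg, neg_neg] using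
      (hasGradientAt_iff_hasFDerivAt.1 h).const_sub (infDist x S)
  have hle_upper := infDist_le_norm_sub hq.1
  have hlower_le : ∀ y, infDist x S - ‖y - x‖ ≤ infDist y S := fun y => by
    linarith [infDist_le_infDist_add_dist (x := x) (y := y) (s := S), dist_eq_norm y x,
      dist_comm x y]
  have hz : infDist z S = (1 - t) * infDist x S := by
    linarith [hle_upper z, hlower_le z]
  rw [hasGradientAt_iff_hasFDerivAt] at hupper hlower ⊢
  exact hlower.of_le_of_le hupper hlower_le hle_upper (by rw [hzx_norm, hz]; ring)
    (by rw [hzq_norm, hz])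

theorem projDirs_subset_reachGrad {x : En n} (hd : 0 < infDist x S) :
    projDirs S x ⊆ reachGrad (fun z => infDist z S) x := by
  rintro _ ⟨q, hq, rfl⟩
  obtain ⟨t, -, ht, ht0⟩ := exists_seq_strictAnti_tendsto' (zero_lt_one' ℝ)
  have hgrad k := hasGradientAt_infDist_of_mem_projSet hd hq (ht k)
  refine ⟨fun k => x - t k • (x - q), fun k h => ?_, fun k => (hgrad k).differentiableAt, ?_,
    by simp only [(hgrad _).gradient, tendsto_const_nhds]⟩
  · exact smul_ne_zero (ht k).1.ne' (sub_ne_zero.2 (ne_of_mem_projSet hd hq)) (sub_eq_self.1 h)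
  · simpa using tendsto_const_nhds.sub (ht0.smul_const (x - q))

theorem gradient_infDist_eq_normalize {z q : En n}
    (hdiff : DifferentiableAt ℝ (fun y => infDist y S) z) (hq : q ∈ projSet S z) (hzq : z ≠ q) :
    gradient (fun y => infDist y S) z = normalize (z - q) := by
  have hmin : IsLocalMin (fun y => ‖y - q‖ - infDist y S) z := by
    refine Eventually.of_forall fun y => ?_
    simp only [norm_sub_of_mem_projSet hq, sub_self]
    exact sub_nonneg.2 (infDist_le_norm_sub hq.1 y)
  have h := hmin.hasFDerivAt_eq_zero
    ((hasGradientAt_iff_hasFDerivAt.1 (hasGradientAt_norm_sub hzq)).sub hdiff.hasFDerivAt)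
  rw [sub_eq_zero] at h
  rw [gradient, ← h, LinearIsometryEquiv.symm_apply_apply]

theorem reachGrad_subset_projDirs (hS : S.Nonempty) (hSc : IsClosed S) {x : En n}
    (hd : 0 < infDist x S) : reachGrad (fun z => infDist z S) x ⊆ projDirs S x := by
  rintro p ⟨xs, -, hdiff, hxs, hgrad⟩
  choose q hq using fun k => projSet_nonempty hS hSc (xs k)
  have hdist : Tendsto (fun k => infDist (xs k) S) atTop (𝓝 (infDist x S)) :=
    ((continuous_infDist_pt S).tendsto x).comp hxs
  have hq_eq : ∀ᶠ k in atTop, xs k - infDist (xs k) S • gradient (fun z => infDist z S) (xs k)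
      = q k := by
    filter_upwards [hdist.eventually (lt_mem_nhds hd)] with k hk
    rw [gradient_infDist_eq_normalize (hdiff k) (hq k) (ne_of_mem_projSet hk (hq k)),
      ← norm_sub_of_mem_projSet (hq k), norm_smul_normalize, sub_sub_cancel]
  have hq₀ := mem_projSet_of_tendsto hSc hxs ((hxs.sub (hdist.smul hgrad)).congr' hq_eq) hq
  refine ⟨_, hq₀, show normalize (x - _) = p from ?_⟩
  have hnorm := norm_sub_of_mem_projSet hq₀
  rw [sub_sub_cancel] at hnorm ⊢
  rw [NormedSpace.normalize, hnorm, inv_smul_smul₀ hd.ne']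

theorem exists_mem_projSet_inner_le (hS : S.Nonempty) (hSc : IsClosed S) {x p : En n}
    (hd : 0 < infDist x S) (hp : p ∈ superDiff (fun z => infDist z S) x) (v : En n) :
    ∃ q ∈ projSet S x, ⟪normalize (x - q), v⟫_ℝ ≤ ⟪p, v⟫_ℝ := by
  obtain ⟨t, -, ht, ht0⟩ := exists_seq_strictAnti_tendsto' (zero_lt_one' ℝ)
  have ht0' : Tendsto t atTop (𝓝[>] 0) :=
    tendsto_nhdsWithin_iff.2 ⟨ht0, Eventually.of_forall fun k => (ht k).1⟩
  have hy : Tendsto (fun k => x + t k • v) atTop (𝓝 x) := by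
    simpa using tendsto_const_nhds.add (ht0.smul_const v)
  choose q hq using fun k => projSet_nonempty hS hSc (x + t k • v)
  have hbdd k : q k ∈ closedBall x (infDist x S + 2 * ‖v‖) := by
    have h := dist_le_of_mem_projSet (x := x) (hq k)
    rw [dist_self_add_right, norm_smul, Real.norm_of_nonneg (ht k).1.le] at h
    rw [mem_closedBall, dist_comm]
    nlinarith [(ht k).2, norm_nonneg v]
  obtain ⟨q₀, -, φ, hφ, hqφ⟩ := tendsto_subseq_of_bounded isBounded_closedBall hbdd
  have hq₀ : q₀ ∈ projSet S x := mem_projSet_of_tendsto hSc (hy.comp hφ.tendsto_atTop) hqφ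
    fun k => hq (φ k)
  have hdir : Tendsto (fun k => ⟪normalize (x - q (φ k)), v⟫_ℝ) atTop
      (𝓝 ⟪normalize (x - q₀), v⟫_ℝ) :=
    (((continuousAt_normalize (sub_ne_zero.2 (ne_of_mem_projSet hd hq₀))).tendsto.comp
      (tendsto_const_nhds.sub hqφ)).inner tendsto_const_nhds)
  refine ⟨q₀, hq₀, le_of_forall_gt_imp_ge_of_dense fun c hc => le_of_tendsto hdir ?_⟩
  have hc_eventually : ∀ᶠ k in atTop, ⟪normalize (x - q k), v⟫_ℝ ≤ c := by
    filter_upwards [ht0'.eventually (eventually_sub_le_of_mem_superDiff hp hc)] with k hk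
    have h := infDist_add_inner_le (x := x) (hq k)
    rw [add_sub_cancel_left, real_inner_smul_right] at h
    exact le_of_mul_le_mul_left (by linarith) (ht k).1
  exact hφ.tendsto_atTop.eventually hc_eventually

theorem superDiff_eq_convexHull_projDirs (hS : S.Nonempty) (hSc : IsClosed S) {x : En n}
    (hd : 0 < infDist x S) :
    superDiff (fun z => infDist z S) x = convexHull ℝ (projDirs S x) := by
  refine Subset.antisymm (fun p hp => ?_)
    (convexHull_min (projDirs_subset_superDiff hd) (convex_superDiff _ x))
  refine (convex_convexHull ℝ _).mem_of_forall_exists_inner_le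
    (isCompact_projDirs hSc hd).convexHull.isClosed fun v => ?_
  obtain ⟨q, hq, hle⟩ := exists_mem_projSet_inner_le hS hSc hd hp (-v)
  rw [inner_neg_right, inner_neg_right, neg_le_neg_iff] at hle
  exact ⟨_, subset_convexHull ℝ _ ⟨q, hq, rfl⟩, by simpa only [real_inner_comm v] using hle⟩

end DistanceFunction

theorem extreme_points_of_superdifferential_of_distance_general {n : ℕ} (S : Set (En n))
    (hS : S.Nonempty) (hSc : IsClosed S) (x : En n) (hx : x ∉ S) :
    Set.extremePoints ℝ (superDiff (fun z => Metric.infDist z S) x)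
        = reachGrad (fun z => Metric.infDist z S) x ∧
      reachGrad (fun z => Metric.infDist z S) x
        = superDiff (fun z => Metric.infDist z S) x ∩ Metric.sphere (0 : En n) 1 := by
  have hd : 0 < infDist x S := (hSc.notMem_iff_infDist_pos hS).1 hx
  have hsphere := projDirs_subset_sphere hd
  rw [superDiff_eq_convexHull_projDirs hS hSc hd,
    (projDirs_subset_reachGrad hd).antisymm' (reachGrad_subset_projDirs hS hSc hd),
    extremePoints_convexHull_eq_of_subset_sphere hsphere,
    convexHull_inter_sphere_eq_of_subset_sphere hsphere]
  exact ⟨rfl, rfl⟩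

/-- Extreme points of the superdifferential of the distance function at a
singular point: `extr D⁺d_S(x) = D*d_S(x) = D⁺d_S(x) ∩ ∂B₁(0)`. -/
theorem extreme_points_of_superdifferential_of_distance {n : ℕ} (S : Set (En n))
    (hS : S.Nonempty) (hSc : IsClosed S) (x : En n) (hx : x ∉ S)
    (hnd : ¬ DifferentiableAt ℝ (fun z => Metric.infDist z S) x) :
    Set.extremePoints ℝ (superDiff (fun z => Metric.infDist z S) x)
        = reachGrad (fun z => Metric.infDist z S) x ∧
      reachGrad (fun z => Metric.infDist z S) x
        = superDiff (fun z => Metric.infDist z S) x ∩ Metric.sphere (0 : En n) 1 :=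
  extreme_points_of_superdifferential_of_distance_general S hS hSc x hx
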